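/- arXiv:2404.04554 — 3 statements merged into one kernel-verified Lean document; each statement's English description precedes it below -/
import Mathlib

section
/- If U_A is a unitary matrix of size 2^(s+a) such that ‖A − α (⟨0^a| ⊗ I_s) U_A (|0^a⟩ ⊗ I_s)‖ ≤ δ and U_B is unitary of size 2^(s+b) with ‖B − β (⟨0^b| ⊗ I_s) U_B (|0^b⟩ ⊗ I_s)‖ ≤ ε (α, β > 0), then there exists a unitary W of size 2^(s+max(a,b)+1) such that ‖(A+B) − (α+β) (⟨0^{max(a,b)+1}| ⊗ I_s) W (|0^{max(a,b)+1}⟩ ⊗ I_s)‖ ≤ δ + ε. -/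
/-!
Pad both encodings with idle ancilla qubits so that they act on a common register, then run the
linear-combination-of-unitaries circuit `(R ⊗ I)† · SELECT · (R ⊗ I)`, where
`SELECT = |0⟩⟨0| ⊗ U_A + |1⟩⟨1| ⊗ U_B` and `R` is a real rotation with first column
`(√(α/(α+β)), √(β/(α+β)))`. This is unitary, and its block at the all-zero ancilla state is
`(α • block(U_A) + β • block(U_B)) / (α + β)`. Hence the error of the new encoding is the sum
`(A - α • block(U_A)) + (B - β • block(U_B))` of the two old errors.
-/

open Matrix
open scoped Matrix.Norms.L2Operator Kronecker

theorem finProdFinEquiv_trans_finCongr_zero {p q r : ℕ} [NeZero p] [NeZero q] [NeZero r]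
    (h : p * q = r) : (finProdFinEquiv.trans (finCongr h)) (0, 0) = 0 := by
  ext
  simp

namespace Matrix

variable {𝕜 ι κ n : Type*}

/-- `U.ancillaBlock i₀` is `(⟨i₀| ⊗ I) U (|i₀⟩ ⊗ I)`. -/
def ancillaBlock (U : Matrix (ι × n) (ι × n) 𝕜) (i₀ : ι) : Matrix n n 𝕜 :=
  U.submatrix (Prod.mk i₀) (Prod.mk i₀)

theorem ancillaBlock_reindex_prodCongr (e : ι ≃ κ) (U : Matrix (ι × n) (ι × n) 𝕜) (i₀ : ι) :
    (reindex (e.prodCongr (Equiv.refl n)) (e.prodCongr (Equiv.refl n)) U).ancillaBlock (e i₀) =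
      U.ancillaBlock i₀ := by
  ext i j
  simp [ancillaBlock]

theorem ancillaBlock_reindex_prodAssoc_symm (U : Matrix (κ × ι × n) (κ × ι × n) 𝕜) (k : κ)
    (i₀ : ι) :
    (reindex (Equiv.prodAssoc κ ι n).symm (Equiv.prodAssoc κ ι n).symm U).ancillaBlock (k, i₀) =
      (U.ancillaBlock k).ancillaBlock i₀ :=
  rfl

theorem ancillaBlock_one_kronecker [MulZeroOneClass 𝕜] [DecidableEq κ] (U : Matrix n n 𝕜)
    (k : κ) : ((1 : Matrix κ κ 𝕜) ⊗ₖ U).ancillaBlock k = U := by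
  ext i j
  simp [ancillaBlock]

/-- The select operator `∑ c, |c⟩⟨c| ⊗ M c`. -/
def selectOp [Zero 𝕜] [DecidableEq κ] (M : κ → Matrix n n 𝕜) : Matrix (κ × n) (κ × n) 𝕜 :=
  reindex (Equiv.prodComm n κ) (Equiv.prodComm n κ) (blockDiagonal M)

theorem selectOp_apply [Zero 𝕜] [DecidableEq κ] (M : κ → Matrix n n 𝕜) (c c' : κ) (y y' : n) :
    selectOp M (c, y) (c', y') = if c = c' then M c y y' else 0 := by
  simp [selectOp, blockDiagonal_apply]

section Unitary

variable [CommRing 𝕜] [StarRing 𝕜] [Fintype ι] [DecidableEq ι] [Fintype κ] [DecidableEq κ]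
  [Fintype n] [DecidableEq n]

theorem reindex_mem_unitaryGroup (e : ι ≃ κ) {U : Matrix ι ι 𝕜}
    (hU : U ∈ unitaryGroup ι 𝕜) : reindex e e U ∈ unitaryGroup κ 𝕜 := by
  rw [mem_unitaryGroup_iff, star_eq_conjTranspose, conjTranspose_reindex, reindex_apply,
    reindex_apply, submatrix_mul_equiv, ← star_eq_conjTranspose, hU.2, submatrix_one_equiv]

theorem blockDiagonal_mem_unitaryGroup {M : κ → Matrix n n 𝕜}
    (hM : ∀ c, M c ∈ unitaryGroup n 𝕜) : blockDiagonal M ∈ unitaryGroup (n × κ) 𝕜 := by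
  rw [mem_unitaryGroup_iff, star_eq_conjTranspose, blockDiagonal_conjTranspose,
    ← blockDiagonal_mul]
  convert blockDiagonal_one with c
  exact (hM c).2

theorem selectOp_mem_unitaryGroup {M : κ → Matrix n n 𝕜}
    (hM : ∀ c, M c ∈ unitaryGroup n 𝕜) : selectOp M ∈ unitaryGroup (κ × n) 𝕜 :=
  reindex_mem_unitaryGroup _ (blockDiagonal_mem_unitaryGroup hM)

def lcu (R : Matrix κ κ 𝕜) (M : κ → Matrix n n 𝕜) : Matrix (κ × n) (κ × n) 𝕜 :=
  (R ⊗ₖ (1 : Matrix n n 𝕜))ᴴ * selectOp M * (R ⊗ₖ (1 : Matrix n n 𝕜))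

theorem lcu_mem_unitaryGroup {R : Matrix κ κ 𝕜} (hR : R ∈ unitaryGroup κ 𝕜)
    {M : κ → Matrix n n 𝕜} (hM : ∀ c, M c ∈ unitaryGroup n 𝕜) :
    lcu R M ∈ unitaryGroup (κ × n) 𝕜 := by
  have hG : R ⊗ₖ (1 : Matrix n n 𝕜) ∈ unitaryGroup (κ × n) 𝕜 :=
    kronecker_mem_unitary hR (one_mem _)
  exact mul_mem (mul_mem (Unitary.star_mem hG) (selectOp_mem_unitaryGroup hM)) hG

theorem ancillaBlock_lcu (R : Matrix κ κ 𝕜) (M : κ → Matrix n n 𝕜) (k : κ) :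
    (lcu R M).ancillaBlock k = ∑ c, (star (R c k) * R c k) • M c := by
  ext y y'
  simp [lcu, ancillaBlock, mul_apply, Fintype.sum_prod_type, selectOp_apply, one_apply,
    Matrix.sum_apply, apply_ite star, ite_mul, mul_comm, mul_left_comm]

end Unitary

theorem exists_mem_unitaryGroup_fin_two_star_mul_self {p q : ℝ} (hp : 0 ≤ p) (hq : 0 ≤ q)
    (hpq : p + q = 1) :
    ∃ R ∈ unitaryGroup (Fin 2) ℂ, star (R 0 0) * R 0 0 = p ∧ star (R 1 0) * R 1 0 = q := by
  have hp' : ((√p : ℝ) : ℂ) * √p = p := by exact_mod_cast Real.mul_self_sqrt hp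
  have hq' : ((√q : ℝ) : ℂ) * √q = q := by exact_mod_cast Real.mul_self_sqrt hq
  have hpq' : (p : ℂ) + q = 1 := by exact_mod_cast hpq
  refine ⟨!![(√p : ℂ), -√q; (√q : ℂ), √p], ?_, by simpa using hp', by simpa using hq'⟩
  rw [mem_unitaryGroup_iff']
  ext i j
  fin_cases i <;> fin_cases j <;>
    simp [mul_apply, Fin.sum_univ_two, hp', hq', hpq', add_comm (q : ℂ), mul_comm (√q : ℂ)]

section BlockEncoding

variable [Fintype ι] [DecidableEq ι] [Fintype κ] [DecidableEq κ] [Fintype n] [DecidableEq n]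

def IsBlockEncoding (U : Matrix (ι × n) (ι × n) ℂ) (i₀ : ι) (α : ℝ) (A : Matrix n n ℂ)
    (ε : ℝ) : Prop :=
  U ∈ unitaryGroup (ι × n) ℂ ∧ ‖A - (α : ℂ) • U.ancillaBlock i₀‖ ≤ ε

namespace IsBlockEncoding

variable {U : Matrix (ι × n) (ι × n) ℂ} {i₀ : ι} {α ε : ℝ} {A : Matrix n n ℂ}

protected theorem reindex (e : ι ≃ κ) {k₀ : κ} (he : e i₀ = k₀)
    (h : IsBlockEncoding U i₀ α A ε) :
    IsBlockEncoding (reindex (e.prodCongr (Equiv.refl n)) (e.prodCongr (Equiv.refl n)) U)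
      k₀ α A ε := by
  subst he
  exact ⟨reindex_mem_unitaryGroup _ h.1, by rw [ancillaBlock_reindex_prodCongr]; exact h.2⟩

theorem one_kronecker (k : κ) (h : IsBlockEncoding U i₀ α A ε) :
    IsBlockEncoding (reindex (Equiv.prodAssoc κ ι n).symm (Equiv.prodAssoc κ ι n).symm
      ((1 : Matrix κ κ ℂ) ⊗ₖ U)) (k, i₀) α A ε :=
  ⟨reindex_mem_unitaryGroup _ (kronecker_mem_unitary (one_mem _) h.1), by
    rw [ancillaBlock_reindex_prodAssoc_symm, ancillaBlock_one_kronecker]; exact h.2⟩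

theorem add {UA UB : Matrix (ι × n) (ι × n) ℂ} {β δ : ℝ} {B : Matrix n n ℂ}
    (hα : 0 ≤ α) (hβ : 0 ≤ β) (hαβ : 0 < α + β)
    (hA : IsBlockEncoding UA i₀ α A δ) (hB : IsBlockEncoding UB i₀ β B ε) :
    ∃ W : Matrix ((Fin 2 × ι) × n) ((Fin 2 × ι) × n) ℂ,
      IsBlockEncoding W (0, i₀) (α + β) (A + B) (δ + ε) := by
  obtain ⟨R, hR, hR0, hR1⟩ := exists_mem_unitaryGroup_fin_two_star_mul_self
    (div_nonneg hα hαβ.le) (div_nonneg hβ hαβ.le) (by rw [← add_div, div_self hαβ.ne'])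
  have hM : ∀ c, ![UA, UB] c ∈ unitaryGroup (ι × n) ℂ := Fin.forall_fin_two.2 ⟨hA.1, hB.1⟩
  refine ⟨reindex (Equiv.prodAssoc _ _ _).symm (Equiv.prodAssoc _ _ _).symm (lcu R ![UA, UB]),
    reindex_mem_unitaryGroup _ (lcu_mem_unitaryGroup hR hM), ?_⟩
  have hwA : ((α + β : ℝ) : ℂ) * (α / (α + β) : ℝ) = α := by
    rw [← Complex.ofReal_mul, mul_div_cancel₀ _ hαβ.ne']
  have hwB : ((α + β : ℝ) : ℂ) * (β / (α + β) : ℝ) = β := by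
    rw [← Complex.ofReal_mul, mul_div_cancel₀ _ hαβ.ne']
  have herror : A + B - ((α + β : ℝ) : ℂ) •
      (reindex (Equiv.prodAssoc _ _ _).symm (Equiv.prodAssoc _ _ _).symm
        (lcu R ![UA, UB])).ancillaBlock (0, i₀) =
      (A - (α : ℂ) • UA.ancillaBlock i₀) + (B - (β : ℂ) • UB.ancillaBlock i₀) := by
    rw [ancillaBlock_reindex_prodAssoc_symm, ancillaBlock_lcu, Fin.sum_univ_two, hR0, hR1]
    simp only [ancillaBlock, submatrix_add, submatrix_smul, Pi.add_apply, Pi.smul_apply, smul_add,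
      smul_smul, hwA, hwB]
    abel
  rw [herror]
  exact (norm_add_le _ _).trans (add_le_add hA.2 hB.2)

end IsBlockEncoding

end BlockEncoding

end Matrix

/-- Addition of block-encoded matrices (LCU): if `U_A` is an `(α,a,δ)`-block-encoding of `A`
and `U_B` is a `(β,b,ε)`-block-encoding of `B` with `α, β > 0`, then there exists a unitary `W`
on `s + max a b + 1` qubits which is an `(α+β, max a b + 1, δ+ε)`-block-encoding of `A + B`. -/
theorem stmt_0 (s a b : ℕ) (α β δ ε : ℝ) (hα : 0 < α) (hβ : 0 < β)
    (A B : Matrix (Fin (2 ^ s)) (Fin (2 ^ s)) ℂ)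
    (UA : Matrix (Fin (2 ^ a) × Fin (2 ^ s)) (Fin (2 ^ a) × Fin (2 ^ s)) ℂ)
    (UB : Matrix (Fin (2 ^ b) × Fin (2 ^ s)) (Fin (2 ^ b) × Fin (2 ^ s)) ℂ)
    (hUA : UA ∈ Matrix.unitaryGroup (Fin (2 ^ a) × Fin (2 ^ s)) ℂ)
    (hUB : UB ∈ Matrix.unitaryGroup (Fin (2 ^ b) × Fin (2 ^ s)) ℂ)
    (hA : ‖A - (α : ℂ) •
        Matrix.of (fun i j => UA ((0 : Fin (2 ^ a)), i) ((0 : Fin (2 ^ a)), j))‖ ≤ δ)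
    (hB : ‖B - (β : ℂ) •
        Matrix.of (fun i j => UB ((0 : Fin (2 ^ b)), i) ((0 : Fin (2 ^ b)), j))‖ ≤ ε) :
    ∃ W : Matrix (Fin (2 ^ (max a b + 1)) × Fin (2 ^ s))
        (Fin (2 ^ (max a b + 1)) × Fin (2 ^ s)) ℂ,
      W ∈ Matrix.unitaryGroup (Fin (2 ^ (max a b + 1)) × Fin (2 ^ s)) ℂ ∧
      ‖(A + B) - ((α + β : ℝ) : ℂ) •
        Matrix.of (fun i j =>
          W ((0 : Fin (2 ^ (max a b + 1))), i) ((0 : Fin (2 ^ (max a b + 1))), j))‖ ≤ δ + ε := by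
  set m := max a b
  have hma : 2 ^ (m - a) * 2 ^ a = 2 ^ m := by
    rw [← pow_add, Nat.sub_add_cancel (le_max_left a b)]
  have hmb : 2 ^ (m - b) * 2 ^ b = 2 ^ m := by
    rw [← pow_add, Nat.sub_add_cancel (le_max_right a b)]
  have hA' := ((show IsBlockEncoding UA 0 α A δ from ⟨hUA, hA⟩).one_kronecker
    (0 : Fin (2 ^ (m - a)))).reindex _ (finProdFinEquiv_trans_finCongr_zero hma)
  have hB' := ((show IsBlockEncoding UB 0 β B ε from ⟨hUB, hB⟩).one_kronecker
    (0 : Fin (2 ^ (m - b)))).reindex _ (finProdFinEquiv_trans_finCongr_zero hmb)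
  obtain ⟨W, hW⟩ := hA'.add hα.le hβ.le (add_pos hα hβ) hB'
  exact ⟨_, hW.reindex _ (finProdFinEquiv_trans_finCongr_zero (pow_succ' 2 m).symm)⟩
end

section
/- Let A ∈ ℂ^{m×n} be nonzero with rows A_{i,·}. Suppose U_L and U_R are unitaries on ℂ^{2^s} ⊗ ℂ^{2^s} (with m,n ≤ 2^s) satisfying U_L |0^s⟩|j⟩ = (1/‖A‖_F) Σ_{i=1}^m ‖A_{i,·}‖ |i⟩|j⟩ for all j ≤ n and U_R |i⟩|0^s⟩ = |i⟩ (1/‖A_{i,·}‖) Σ_{j=1}^n A_{i,j} |j⟩ for all i ≤ m with A_{i,·} ≠ 0. Then ⟨i|⟨0^s| U_L† U_R |0^s⟩|j⟩ = A_{i,j}/‖A‖_F for all such i,j; hence U_L† U_R is a (‖A‖_F, s)-block-encoding of A. -/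
/-!
The `(0, j), (i, 0)` entry of `U_Lᴴ U_R` is the inner product of the state `U_L |0⟩|j⟩` with
the state `U_R |i⟩|0⟩`. The first is supported on `{(i', j)}`, the second on `{(i, j')}`, so
only the basis vector `|i⟩|j⟩` contributes, and the product of its two amplitudes is
`(‖A_{i,·}‖ / ‖A‖_F) · (A_{i,j} / ‖A_{i,·}‖) = A_{i,j} / ‖A‖_F`.
-/

open Matrix

theorem conjTranspose_mul_apply_eq_star_mulVec_single_dotProduct {ι R : Type*} [Fintype ι]
    [DecidableEq ι] [CommSemiring R] [StarRing R] (M N : Matrix ι ι R) (p q : ι) :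
    (Mᴴ * N) p q = star (M *ᵥ Pi.single p 1) ⬝ᵥ (N *ᵥ Pi.single q 1) := by
  simp [mul_apply, dotProduct]

theorem star_sum_smul_single_dotProduct_sum_smul_single {α β ι κ R : Type*}
    [Fintype α] [Fintype β] [Fintype ι] [Fintype κ] [DecidableEq α] [DecidableEq β]
    [CommSemiring R] [StarRing R] {f : ι → α} {g : κ → β}
    (hf : Function.Injective f) (hg : Function.Injective g) (a : ι → R) (b : κ → R)
    (i₀ : ι) (j₀ : κ) :
    star (∑ i, a i • Pi.single (f i, g j₀) (1 : R)) ⬝ᵥ ∑ j, b j • Pi.single (f i₀, g j) 1 =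
      star (a i₀) * b j₀ := by
  classical
  simp [star_sum, dotProduct_sum, Pi.single_apply, Prod.ext_iff, hf.eq_iff, hg.eq_iff, ite_and,
    mul_comm]

theorem sqrt_sum_norm_sq_ne_zero {ι E : Type*} [Fintype ι] [NormedAddCommGroup E] {v : ι → E}
    (hv : ∃ j, v j ≠ 0) : √(∑ j, ‖v j‖ ^ 2) ≠ 0 := by
  obtain ⟨j, hj⟩ := hv
  exact Real.sqrt_ne_zero'.mpr <| Finset.sum_pos' (fun _ _ => by positivity)
    ⟨j, Finset.mem_univ j, pow_pos (norm_pos_iff.mpr hj) 2⟩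

theorem stmt_2_general (s m n : ℕ) (hm : m ≤ 2 ^ s) (hn : n ≤ 2 ^ s)
    (A : Matrix (Fin m) (Fin n) ℂ)
    (UL UR : Matrix ((Fin (2 ^ s)) × (Fin (2 ^ s))) ((Fin (2 ^ s)) × (Fin (2 ^ s))) ℂ)
    -- `U_L |0^s⟩|j⟩ = (1/‖A‖_F) ∑ i ‖A_{i,·}‖ |i⟩|j⟩`
    (hL : ∀ j : Fin n,
      UL.mulVec (Pi.single (M := fun _ : Fin (2 ^ s) × Fin (2 ^ s) => ℂ)
          ((0 : Fin (2 ^ s)), Fin.castLE hn j) 1) =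
        ∑ i : Fin m,
          ((Real.sqrt (∑ j' : Fin n, ‖A i j'‖ ^ 2) /
              Real.sqrt (∑ i' : Fin m, ∑ j' : Fin n, ‖A i' j'‖ ^ 2) : ℝ) : ℂ) •
            Pi.single (M := fun _ : Fin (2 ^ s) × Fin (2 ^ s) => ℂ)
              (Fin.castLE hm i, Fin.castLE hn j) 1)
    -- `U_R |i⟩|0^s⟩ = |i⟩ (1/‖A_{i,·}‖) ∑ j A_{i,j} |j⟩` for every nonzero row `i`
    (hR : ∀ i : Fin m, (∃ j : Fin n, A i j ≠ 0) →
      UR.mulVec (Pi.single (M := fun _ : Fin (2 ^ s) × Fin (2 ^ s) => ℂ)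
          (Fin.castLE hm i, (0 : Fin (2 ^ s))) 1) =
        ∑ j : Fin n,
          (A i j / ((Real.sqrt (∑ j' : Fin n, ‖A i j'‖ ^ 2) : ℝ) : ℂ)) •
            Pi.single (M := fun _ : Fin (2 ^ s) × Fin (2 ^ s) => ℂ)
              (Fin.castLE hm i, Fin.castLE hn j) 1) :
    ∀ i : Fin m, ∀ j : Fin n, (∃ j' : Fin n, A i j' ≠ 0) →
      (ULᴴ * UR) ((0 : Fin (2 ^ s)), Fin.castLE hn j) (Fin.castLE hm i, (0 : Fin (2 ^ s))) =
        A i j / ((Real.sqrt (∑ i' : Fin m, ∑ j' : Fin n, ‖A i' j'‖ ^ 2) : ℝ) : ℂ) := by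
  intro i j hrow
  have hrow_norm : ((√(∑ j', ‖A i j'‖ ^ 2) : ℝ) : ℂ) ≠ 0 :=
    Complex.ofReal_ne_zero.mpr (sqrt_sum_norm_sq_ne_zero hrow)
  rw [conjTranspose_mul_apply_eq_star_mulVec_single_dotProduct, hL j, hR i hrow,
    star_sum_smul_single_dotProduct_sum_smul_single (Fin.castLE_injective hm)
      (Fin.castLE_injective hn), Complex.star_def, Complex.conj_ofReal]
  push_cast
  field_simp

/-- Block encoding of a matrix stored in a quantum data structure: if `U_L` prepares the
row-norm state and `U_R` prepares the normalized rows, then the corresponding matrix entry of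
`U_L† U_R` equals `A i j / ‖A‖_F`; hence `U_L† U_R` is a `(‖A‖_F, s)`-block-encoding of `A`. -/
theorem stmt_2 (s m n : ℕ) (hm : m ≤ 2 ^ s) (hn : n ≤ 2 ^ s)
    (A : Matrix (Fin m) (Fin n) ℂ) (hA : A ≠ 0)
    (UL UR : Matrix ((Fin (2 ^ s)) × (Fin (2 ^ s))) ((Fin (2 ^ s)) × (Fin (2 ^ s))) ℂ)
    (hUL : UL ∈ Matrix.unitaryGroup ((Fin (2 ^ s)) × (Fin (2 ^ s))) ℂ)
    (hUR : UR ∈ Matrix.unitaryGroup ((Fin (2 ^ s)) × (Fin (2 ^ s))) ℂ)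
    -- `U_L |0^s⟩|j⟩ = (1/‖A‖_F) ∑ i ‖A_{i,·}‖ |i⟩|j⟩`
    (hL : ∀ j : Fin n,
      UL.mulVec (Pi.single (M := fun _ : Fin (2 ^ s) × Fin (2 ^ s) => ℂ)
          ((0 : Fin (2 ^ s)), Fin.castLE hn j) 1) =
        ∑ i : Fin m,
          ((Real.sqrt (∑ j' : Fin n, ‖A i j'‖ ^ 2) /
              Real.sqrt (∑ i' : Fin m, ∑ j' : Fin n, ‖A i' j'‖ ^ 2) : ℝ) : ℂ) •
            Pi.single (M := fun _ : Fin (2 ^ s) × Fin (2 ^ s) => ℂ)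
              (Fin.castLE hm i, Fin.castLE hn j) 1)
    -- `U_R |i⟩|0^s⟩ = |i⟩ (1/‖A_{i,·}‖) ∑ j A_{i,j} |j⟩` for every nonzero row `i`
    (hR : ∀ i : Fin m, (∃ j : Fin n, A i j ≠ 0) →
      UR.mulVec (Pi.single (M := fun _ : Fin (2 ^ s) × Fin (2 ^ s) => ℂ)
          (Fin.castLE hm i, (0 : Fin (2 ^ s))) 1) =
        ∑ j : Fin n,
          (A i j / ((Real.sqrt (∑ j' : Fin n, ‖A i j'‖ ^ 2) : ℝ) : ℂ)) •
            Pi.single (M := fun _ : Fin (2 ^ s) × Fin (2 ^ s) => ℂ)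
              (Fin.castLE hm i, Fin.castLE hn j) 1) :
    ∀ i : Fin m, ∀ j : Fin n, (∃ j' : Fin n, A i j' ≠ 0) →
      (ULᴴ * UR) ((0 : Fin (2 ^ s)), Fin.castLE hn j) (Fin.castLE hm i, (0 : Fin (2 ^ s))) =
        A i j / ((Real.sqrt (∑ i' : Fin m, ∑ j' : Fin n, ‖A i' j'‖ ^ 2) : ℝ) : ℂ) :=
  stmt_2_general s m n hm hn A UL UR hL hR
end

section
/- Let A be an invertible n×n complex matrix with all singular values in [1/κ, 1], and let p be an odd polynomial with |p(x) − 1/(κβ x)| ≤ ε for all x ∈ [1/κ, 1] and |p(x)| ≤ 1 on [1/κ,1]. Then ‖κβ · p_SV(A†) − A^{-1}‖ ≤ κβε, where p_SV(A†) = V p(Σ) W† for any SVD A = W Σ V†. -/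
open Matrix
open scoped Matrix.Norms.L2Operator

/-!
Unitary factors do not change the spectral norm, so with `A⁻¹ = V Σ⁻¹ W†` the error
`κβ · V p(Σ) W† - A⁻¹ = V (κβ p(Σ) - Σ⁻¹) W†` has norm `maxᵢ |κβ p(σᵢ) - 1/σᵢ|`, and each term
is `κβ |p(σᵢ) - 1/(κβ σᵢ)| ≤ κβε`.
-/

namespace Matrix

variable {n 𝕜 : Type*} [Fintype n] [DecidableEq n]

theorem inv_mul_diagonal_mul_conjTranspose [Field 𝕜] [StarRing 𝕜] {W V : Matrix n n 𝕜}
    (hW : W ∈ unitaryGroup n 𝕜) (hV : V ∈ unitaryGroup n 𝕜) {d : n → 𝕜} (hd : ∀ i, d i ≠ 0) :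
    (W * diagonal d * Vᴴ)⁻¹ = V * diagonal d⁻¹ * Wᴴ := by
  refine inv_eq_right_inv ?_
  have hdd : diagonal d * diagonal d⁻¹ = 1 := by
    rw [diagonal_mul_diagonal, ← diagonal_one]
    exact congrArg diagonal (funext fun i => mul_inv_cancel₀ (hd i))
  calc W * diagonal d * Vᴴ * (V * diagonal d⁻¹ * Wᴴ)
      = W * diagonal d * (Vᴴ * V) * diagonal d⁻¹ * Wᴴ := by noncomm_ring
    _ = 1 := by
      rw [show Vᴴ * V = 1 from hV.1, mul_one, mul_assoc W, hdd, mul_one]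
      exact hW.2

theorem l2_opNorm_unitary_mul_diagonal_mul_conjTranspose [RCLike 𝕜] {U U' : Matrix n n 𝕜}
    (hU : U ∈ unitaryGroup n 𝕜) (hU' : U' ∈ unitaryGroup n 𝕜) (v : n → 𝕜) :
    ‖U * diagonal v * U'ᴴ‖ = ‖v‖ := by
  rw [← star_eq_conjTranspose, CStarRing.norm_mul_mem_unitary _ (Unitary.star_mem hU'),
    CStarRing.norm_mem_unitary_mul _ hU, l2_opNorm_diagonal]

end Matrix

theorem abs_mul_sub_inv_le_of_abs_sub_one_div_le {c x y ε : ℝ} (hc : 0 < c) (hx : x ≠ 0)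
    (h : |y - 1 / (c * x)| ≤ ε) : |c * y - x⁻¹| ≤ c * ε := by
  have hsplit : c * y - x⁻¹ = c * (y - 1 / (c * x)) := by field_simp
  rw [hsplit, abs_mul, abs_of_pos hc]
  exact mul_le_mul_of_nonneg_left h hc.le

theorem stmt_15_general (n : ℕ) (κ β ε : ℝ) (hκ : 1 ≤ κ) (hβ : 0 < β) (hε : 0 < ε)
    (A W V : Matrix (Fin n) (Fin n) ℂ) (d : Fin n → ℝ)
    (hW : W ∈ Matrix.unitaryGroup (Fin n) ℂ)
    (hV : V ∈ Matrix.unitaryGroup (Fin n) ℂ)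
    (hd : ∀ i, d i ∈ Set.Icc (1 / κ) 1)
    (hSVD : A = W * Matrix.diagonal (fun i => (d i : ℂ)) * Vᴴ)
    (p : Polynomial ℝ)
    (happrox : ∀ x ∈ Set.Icc (1 / κ) 1, |p.eval x - 1 / (κ * β * x)| ≤ ε) :
    ‖((κ * β : ℝ) : ℂ) • (V * Matrix.diagonal (fun i => ((p.eval (d i) : ℝ) : ℂ)) * Wᴴ)
        - A⁻¹‖ ≤ κ * β * ε := by
  have hκβ : 0 < κ * β := mul_pos (by linarith) hβ
  have hd_ne : ∀ i, d i ≠ 0 := fun i => ((one_div_pos.2 (by linarith)).trans_le (hd i).1).ne'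
  have herror : ((κ * β : ℝ) : ℂ) • (V * diagonal (fun i => ((p.eval (d i) : ℝ) : ℂ)) * Wᴴ)
      - A⁻¹ = V * diagonal (fun i => ((κ * β * p.eval (d i) - (d i)⁻¹ : ℝ) : ℂ)) * Wᴴ := by
    have hdiag : diagonal (fun i => ((κ * β * p.eval (d i) - (d i)⁻¹ : ℝ) : ℂ))
        = ((κ * β : ℝ) : ℂ) • diagonal (fun i => ((p.eval (d i) : ℝ) : ℂ))
          - diagonal (fun i => (d i : ℂ))⁻¹ := by
      rw [← diagonal_smul, diagonal_sub]
      congr 1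
      funext i
      simp
    rw [hSVD, inv_mul_diagonal_mul_conjTranspose hW hV (fun i => by exact_mod_cast hd_ne i),
      hdiag, Matrix.mul_sub, Matrix.sub_mul, Matrix.mul_smul, Matrix.smul_mul]
  rw [herror, l2_opNorm_unitary_mul_diagonal_mul_conjTranspose hV hW,
    pi_norm_le_iff_of_nonneg (by positivity)]
  intro i
  rw [Complex.norm_real, Real.norm_eq_abs]
  exact abs_mul_sub_inv_le_of_abs_sub_one_div_le hκβ (hd_ne i) (happrox (d i) (hd i))

/-- Matrix inversion by QSVT: if all singular values of `A` lie in `[1/κ, 1]` and `p` is an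
odd polynomial with `|p(x) - 1/(κβx)| ≤ ε` and `|p(x)| ≤ 1` on `[1/κ, 1]`, then
`‖κβ · p_SV(A†) - A⁻¹‖ ≤ κβε`, where `p_SV(A†) = V p(Σ) W†` for an SVD `A = W Σ V†`. -/
theorem stmt_15 (n : ℕ) (κ β ε : ℝ) (hκ : 1 ≤ κ) (hβ : 0 < β) (hε : 0 < ε)
    (A W V : Matrix (Fin n) (Fin n) ℂ) (d : Fin n → ℝ)
    (hW : W ∈ Matrix.unitaryGroup (Fin n) ℂ)
    (hV : V ∈ Matrix.unitaryGroup (Fin n) ℂ)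
    (hd : ∀ i, d i ∈ Set.Icc (1 / κ) 1)
    (hSVD : A = W * Matrix.diagonal (fun i => (d i : ℂ)) * Vᴴ)
    (hAinv : IsUnit A.det)
    (p : Polynomial ℝ)
    (hodd : ∀ x : ℝ, p.eval (-x) = -p.eval x)
    (happrox : ∀ x ∈ Set.Icc (1 / κ) 1, |p.eval x - 1 / (κ * β * x)| ≤ ε)
    (hbound : ∀ x ∈ Set.Icc (1 / κ) 1, |p.eval x| ≤ 1) :
    ‖((κ * β : ℝ) : ℂ) • (V * Matrix.diagonal (fun i => ((p.eval (d i) : ℝ) : ℂ)) * Wᴴ)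
        - A⁻¹‖ ≤ κ * β * ε :=
  stmt_15_general n κ β ε hκ hβ hε A W V d hW hV hd hSVD p happrox
end
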